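/- (Assouad's Lemma, product form.) Let ν ≥ 1 and T ≥ 1 be integers and (Z, 𝒜) a measurable space. For each τ ∈ {−1,1}^ν let Q^{(τ)} = Q_1^{(τ)} × ⋯ × Q_T^{(τ)} be a product probability measure on Z^T. Then for every measurable map g : Z^T → {−1,1}^ν there exists τ ∈ {−1,1}^ν such that E_{W ∼ Q^{(τ)}}[ hd(g(W), τ) ] ≥ (ν/2) · min{ ‖Q^{(τ')} ∧ Q^{(τ'')}‖₁ : τ', τ'' ∈ {−1,1}^ν, hd(τ', τ'') = 1 }. -/

import Mathlib

open MeasureTheory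

/-- Assouad's Lemma, product form: for every measurable
`g : Z^T → {−1,1}^ν` (encoding `{−1,1}` by `Bool`), there exists
`τ ∈ {−1,1}^ν` with
`E_{W ∼ Q^{(τ)}}[hd(g(W), τ)] ≥ (ν/2)·min{‖Q^{(τ')} ∧ Q^{(τ'')}‖₁ : hd(τ',τ'') = 1}`. -/
theorem stmt14 {Z : Type*} [MeasurableSpace Z] (ν T : ℕ) (hν : 1 ≤ ν) (hT : 1 ≤ T)
    (Q : (Fin ν → Bool) → Fin T → Measure Z)
    (hQ : ∀ τ t, IsProbabilityMeasure (Q τ t))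
    (g : (Fin T → Z) → Fin ν → Bool) (hg : Measurable g) :
    ∃ τ : Fin ν → Bool,
      (ν : ℝ) / 2 *
        ⨅ p : {p : (Fin ν → Bool) × (Fin ν → Bool) // hammingDist p.1 p.2 = 1},
          ((Measure.pi (Q p.1.1) ⊓ Measure.pi (Q p.1.2)) Set.univ).toReal
      ≤ ∫ w, (hammingDist (g w) τ : ℝ) ∂(Measure.pi (Q τ)) := by
  classical
  haveI : ∀ τ t, IsProbabilityMeasure (Q τ t) := hQ
  set μ : (Fin ν → Bool) → Measure (Fin T → Z) := fun τ => Measure.pi (Q τ) with hμdef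
  haveI hprob : ∀ τ, IsProbabilityMeasure (μ τ) := fun τ => by
    simp only [hμdef]; infer_instance
  set m : ℝ := ⨅ p : {p : (Fin ν → Bool) × (Fin ν → Bool) // hammingDist p.1 p.2 = 1},
      ((μ p.1.1 ⊓ μ p.1.2) Set.univ).toReal with hm
  -- the "error sets"
  set A : (Fin ν → Bool) → Fin ν → Set (Fin T → Z) := fun τ i => {w | g w i ≠ τ i} with hA
  have hAmeas : ∀ τ i, MeasurableSet (A τ i) := by
    intro τ i
    have : A τ i = (fun w => g w i) ⁻¹' ({τ i}ᶜ) := by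
      ext w; cases hgw : g w i <;> cases hτ : τ i <;> simp [hA, hgw, hτ]
    rw [this]
    exact ((measurable_pi_apply i).comp hg) (MeasurableSet.compl (measurableSet_singleton _))
  -- integral identity
  have hint : ∀ τ, ∫ w, (hammingDist (g w) τ : ℝ) ∂(μ τ)
      = ∑ i : Fin ν, ((μ τ) (A τ i)).toReal := by
    intro τ
    have h1 : ∀ w, (hammingDist (g w) τ : ℝ)
        = ∑ i : Fin ν, (A τ i).indicator (fun _ => (1 : ℝ)) w := by
      intro w
      rw [hammingDist, Finset.card_filter]
      push_cast
      refine Finset.sum_congr rfl fun i _ => ?_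
      by_cases h : g w i = τ i <;> simp [Set.indicator, hA, h]
    calc ∫ w, (hammingDist (g w) τ : ℝ) ∂(μ τ)
        = ∫ w, ∑ i : Fin ν, (A τ i).indicator (fun _ => (1 : ℝ)) w ∂(μ τ) := by
          simp only [h1]
      _ = ∑ i : Fin ν, ∫ w, (A τ i).indicator (fun _ => (1 : ℝ)) w ∂(μ τ) := by
          refine integral_finset_sum _ fun i _ => ?_
          exact (integrable_const (1 : ℝ)).indicator (hAmeas τ i)
      _ = ∑ i : Fin ν, ((μ τ) (A τ i)).toReal := by
          refine Finset.sum_congr rfl fun i _ => ?_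
          have := integral_indicator_one (μ := μ τ) (hAmeas τ i)
          rw [measureReal_def] at this
          exact this
  -- the flip map
  set e : Fin ν → (Fin ν → Bool) → (Fin ν → Bool) :=
    fun i τ => Function.update τ i (!(τ i)) with he
  have heinv : ∀ i, Function.Involutive (e i) := by
    intro i τ
    funext j
    by_cases h : j = i
    · subst h; simp [he]
    · simp [he, Function.update_of_ne h]
  have hflipA : ∀ i τ, A (e i τ) i = (A τ i)ᶜ := by
    intro i τ
    ext w
    simp only [hA, he, Set.mem_setOf_eq, Set.mem_compl_iff, Function.update_self]
    cases g w i <;> cases τ i <;> simp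
  have hhd : ∀ i τ, hammingDist τ (e i τ) = 1 := by
    intro i τ
    rw [hammingDist]
    have : (Finset.univ.filter fun j => τ j ≠ e i τ j) = {i} := by
      ext j
      simp only [Finset.mem_filter, Finset.mem_univ, true_and, Finset.mem_singleton]
      by_cases h : j = i
      · subst h
        simp only [he, Function.update_self]
        constructor
        · intro; trivial
        · intro; cases τ j <;> simp
      · simp [he, Function.update_of_ne h, h]
    rw [this, Finset.card_singleton]
  -- key two-point inequality
  have key : ∀ i τ, m ≤ ((μ τ) (A τ i)).toReal + ((μ (e i τ)) (A (e i τ) i)).toReal := by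
    intro i τ
    have hle : m ≤ ((μ τ ⊓ μ (e i τ)) Set.univ).toReal := by
      have hbdd : BddBelow (Set.range fun p :
          {p : (Fin ν → Bool) × (Fin ν → Bool) // hammingDist p.1 p.2 = 1} =>
          ((μ p.1.1 ⊓ μ p.1.2) Set.univ).toReal) :=
        Set.Finite.bddBelow (Set.finite_range _)
      exact ciInf_le hbdd ⟨(τ, e i τ), hhd i τ⟩
    refine hle.trans ?_
    rw [hflipA]
    have h1 : (μ τ ⊓ μ (e i τ)) Set.univ
        = (μ τ ⊓ μ (e i τ)) (A τ i) + (μ τ ⊓ μ (e i τ)) (A τ i)ᶜ := by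
      rw [measure_add_measure_compl (hAmeas τ i)]
    have h2 : (μ τ ⊓ μ (e i τ)) (A τ i) ≤ (μ τ) (A τ i) :=
      Measure.le_iff'.1 inf_le_left _
    have h3 : (μ τ ⊓ μ (e i τ)) (A τ i)ᶜ ≤ (μ (e i τ)) (A τ i)ᶜ :=
      Measure.le_iff'.1 inf_le_right _
    have hfin1 : (μ τ) (A τ i) ≠ ⊤ := measure_ne_top _ _
    have hfin2 : (μ (e i τ)) (A τ i)ᶜ ≠ ⊤ := measure_ne_top _ _
    calc ((μ τ ⊓ μ (e i τ)) Set.univ).toReal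
        ≤ ((μ τ) (A τ i) + (μ (e i τ)) (A τ i)ᶜ).toReal := by
          refine ENNReal.toReal_mono ?_ ?_
          · exact ENNReal.add_ne_top.2 ⟨hfin1, hfin2⟩
          · rw [h1]; exact add_le_add h2 h3
      _ = ((μ τ) (A τ i)).toReal + ((μ (e i τ)) (A τ i)ᶜ).toReal :=
          ENNReal.toReal_add hfin1 hfin2
  -- sum over τ via involution
  have hsumflip : ∀ i, ∑ τ : Fin ν → Bool, ((μ (e i τ)) (A (e i τ) i)).toReal
      = ∑ τ : Fin ν → Bool, ((μ τ) (A τ i)).toReal := by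
    intro i
    exact Equiv.sum_comp ((heinv i).toPerm) (fun τ => ((μ τ) (A τ i)).toReal)
  set S : ℝ := ∑ τ : Fin ν → Bool, ∑ i : Fin ν, ((μ τ) (A τ i)).toReal with hS
  have hcard : (Fintype.card (Fin ν → Bool) : ℝ) = (2 : ℝ) ^ ν := by
    simp [Fintype.card_fun]
  have h2S : (Fintype.card (Fin ν → Bool) : ℝ) * ((ν : ℝ) * m) ≤ 2 * S := by
    have : ∀ i : Fin ν, (Fintype.card (Fin ν → Bool) : ℝ) * m
        ≤ 2 * ∑ τ : Fin ν → Bool, ((μ τ) (A τ i)).toReal := by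
      intro i
      have := Finset.sum_le_sum (s := Finset.univ) (fun τ _ => key i τ)
      rw [Finset.sum_add_distrib, hsumflip i, Finset.sum_const, Finset.card_univ,
        nsmul_eq_mul] at this
      linarith
    have hsum := Finset.sum_le_sum (s := Finset.univ) (fun i _ => this i)
    rw [Finset.sum_const, Finset.card_univ, Fintype.card_fin, nsmul_eq_mul] at hsum
    have hSc : S = ∑ i : Fin ν, ∑ τ : Fin ν → Bool, ((μ τ) (A τ i)).toReal :=
      Finset.sum_comm
    rw [← Finset.mul_sum, ← hSc] at hsum
    calc (Fintype.card (Fin ν → Bool) : ℝ) * ((ν : ℝ) * m)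
        = (ν : ℝ) * ((Fintype.card (Fin ν → Bool) : ℝ) * m) := by ring
      _ ≤ 2 * S := hsum
  -- pigeonhole
  have hpig : ∃ τ ∈ (Finset.univ : Finset (Fin ν → Bool)),
      (ν : ℝ) / 2 * m ≤ ∑ i : Fin ν, ((μ τ) (A τ i)).toReal := by
    refine Finset.exists_le_of_sum_le Finset.univ_nonempty ?_
    rw [Finset.sum_const, Finset.card_univ, nsmul_eq_mul, ← hS]
    nlinarith [h2S]
  obtain ⟨τ, -, hτ⟩ := hpig
  exact ⟨τ, by rw [hint τ] ; exact hτ⟩
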